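/- For each j with r ≤ j ≤ n−1, the ℂ-linear endomorphism π_L(V_j) of I(n) given by φ ↦ V_j * φ has trace 0. -/

import Mathlib

noncomputable section

/-- `y(t) = (1,0;t,1)` as an element of `GL₂(R)`. -/
def yG {R : Type*} [CommRing R] (t : R) : GL (Fin 2) R :=
  ⟨!![1, 0; t, 1], !![1, 0; -t, 1],
   by ext i j; fin_cases i <;> fin_cases j <;> simp [Matrix.mul_apply, Fin.sum_univ_two],
   by ext i j; fin_cases i <;> fin_cases j <;> simp [Matrix.mul_apply, Fin.sum_univ_two]⟩

/-- Membership in the subgroup `B` of invertible upper triangular matrices. -/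
def inB {R : Type*} [CommRing R] (g : GL (Fin 2) R) : Prop :=
  (g : Matrix (Fin 2) (Fin 2) R) 1 0 = 0

/-- `χ_B(b) = χ(d_b)`, where `d_b` is the `(2,2)`-entry of `b` (for `b ∈ B` this entry is a
unit; the function is extended by `0` elsewhere). -/
def chiB {R : Type*} [CommRing R] (χ : Rˣ →* ℂˣ) (g : GL (Fin 2) R) : ℂ :=
  letI := Classical.dec (IsUnit ((g : Matrix (Fin 2) (Fin 2) R) 1 1))
  if h : IsUnit ((g : Matrix (Fin 2) (Fin 2) R) 1 1) then (χ h.unit : ℂ) else 0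

/-- `|B|`. -/
def cardB (R : Type*) [CommRing R] : ℕ := Nat.card {g : GL (Fin 2) R // inB g}

/-- Convolution `(f*g)(x) = |B|⁻¹ Σ_{y∈G} f(y) g(y⁻¹x)`. -/
def conv {R : Type*} [CommRing R] [Fintype R] [DecidableEq R]
    (f g : GL (Fin 2) R → ℂ) : GL (Fin 2) R → ℂ :=
  fun x => (cardB R : ℂ)⁻¹ * ∑ y : GL (Fin 2) R, f y * g (y⁻¹ * x)

/-- Membership in the Hecke algebra `H(χ)` of `χ_B`-bi-equivariant functions on `G`. -/
def memH {R : Type*} [CommRing R] (χ : Rˣ →* ℂˣ) (f : GL (Fin 2) R → ℂ) : Prop :=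
  ∀ b x b' : GL (Fin 2) R, inB b → inB b' →
    f (b * x * b') = chiB χ b * chiB χ b' * f x

/-- `V_j`: the unique element of `H(χ)` vanishing off the double coset `B y_j B` with
`V_j(y_j) = 1`, where `y_j = (1,0;p^j,1)`. -/
def isV (p n : ℕ) (χ : (ZMod (p ^ n))ˣ →* ℂˣ) (j : ℕ)
    (V : GL (Fin 2) (ZMod (p ^ n)) → ℂ) : Prop :=
  memH χ V ∧
  (∀ x : GL (Fin 2) (ZMod (p ^ n)),
      (¬ ∃ b b' : GL (Fin 2) (ZMod (p ^ n)), inB b ∧ inB b' ∧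
          x = b * yG ((p : ZMod (p ^ n)) ^ j) * b') → V x = 0) ∧
  V (yG ((p : ZMod (p ^ n)) ^ j)) = 1

/-- `χ` has conductor `p^r`: trivial on units `≡ 1 (mod p^r)`, nontrivial on units
`≡ 1 (mod p^{r−1})`. -/
def hasConductor (p n r : ℕ) (χ : (ZMod (p ^ n))ˣ →* ℂˣ) : Prop :=
  (∀ u : (ZMod (p ^ n))ˣ, (p : ZMod (p ^ n)) ^ r ∣ ((u : ZMod (p ^ n)) - 1) → χ u = 1) ∧
  ∃ u : (ZMod (p ^ n))ˣ, (p : ZMod (p ^ n)) ^ (r - 1) ∣ ((u : ZMod (p ^ n)) - 1) ∧ χ u ≠ 1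

/-- `I(n) = {φ : G → ℂ : φ(bx) = χ_B(b)φ(x) for all b ∈ B, x ∈ G}` as a `ℂ`-subspace of
the functions `G → ℂ`. -/
def Isub (p n : ℕ) (χ : (ZMod (p ^ n))ˣ →* ℂˣ) :
    Submodule ℂ (GL (Fin 2) (ZMod (p ^ n)) → ℂ) where
  carrier := {φ | ∀ b x : GL (Fin 2) (ZMod (p ^ n)), inB b → φ (b * x) = chiB χ b * φ x}
  add_mem' := by
    intro f g hf hg b x hb
    simp only [Pi.add_apply, hf b x hb, hg b x hb]; ring
  zero_mem' := by intro b x hb; simp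
  smul_mem' := by
    intro c f hf b x hb
    simp only [Pi.smul_apply, hf b x hb, smul_eq_mul]; ring

/-!
Let `P φ = |B|⁻¹ Σ_{b ∈ B} χ_B(b)⁻¹ φ(b ·)` be the averaging projection of `G → ℂ` onto `I(n)`.
Since `π_L(V)` is `P ∘ C_V` restricted to `I(n)`, where `C_V` is convolution by `V` on all of
`G → ℂ`, its trace is the trace of `C_V ∘ P`. In the basis of point masses the diagonal entry of
`C_V ∘ P` at `x` is `|B|⁻¹ Σ_y V(y) (P δ_x)(y⁻¹x)`, and `(P δ_x)(y⁻¹x) ≠ 0` forces `y ∈ B`.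
But `V_j` vanishes on `B`: the `(2,1)`-entry of `b y_j b'` is `p^j` times two units,
hence nonzero for `j < n`.
-/

open Matrix

section Borel

variable {R : Type*} [CommRing R]

lemma isUnit_apply_one_one_of_inB {b : GL (Fin 2) R} (hb : inB b) :
    IsUnit ((b : Matrix (Fin 2) (Fin 2) R) 1 1) := by
  have hdet : IsUnit (b : Matrix (Fin 2) (Fin 2) R).det := b.isUnit.map detMonoidHom
  rw [det_fin_two, hb, mul_zero, sub_zero] at hdet
  exact isUnit_of_mul_isUnit_right hdet

lemma isUnit_apply_zero_zero_of_inB {b : GL (Fin 2) R} (hb : inB b) :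
    IsUnit ((b : Matrix (Fin 2) (Fin 2) R) 0 0) := by
  have hdet : IsUnit (b : Matrix (Fin 2) (Fin 2) R).det := b.isUnit.map detMonoidHom
  rw [det_fin_two, hb, mul_zero, sub_zero] at hdet
  exact isUnit_of_mul_isUnit_left hdet

lemma mul_apply_one_one_of_inB {b : GL (Fin 2) R} (hb : inB b) (g : GL (Fin 2) R) :
    ((b * g : GL (Fin 2) R) : Matrix (Fin 2) (Fin 2) R) 1 1
      = (b : Matrix (Fin 2) (Fin 2) R) 1 1 * (g : Matrix (Fin 2) (Fin 2) R) 1 1 := by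
  rw [Units.val_mul, mul_apply, Fin.sum_univ_two, hb, zero_mul, zero_add]

variable (R) in
def borelSubgroup : Subgroup (GL (Fin 2) R) where
  carrier := {g | inB g}
  mul_mem' {b b'} hb hb' := by
    change inB (b * b')
    rw [inB, Units.val_mul, mul_apply, Fin.sum_univ_two, hb, hb', zero_mul, mul_zero, add_zero]
  one_mem' := by simp [inB]
  inv_mem' {b} hb := by
    have hb10 : (b : Matrix (Fin 2) (Fin 2) R) 1 0 = 0 := hb
    simp [inB, coe_units_inv, inv_def, adjugate_fin_two, hb10]

instance [DecidableEq R] : DecidablePred (· ∈ borelSubgroup R) :=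
  fun g => inferInstanceAs (Decidable ((g : Matrix (Fin 2) (Fin 2) R) 1 0 = 0))

lemma chiB_eq_of_mem_borelSubgroup (χ : Rˣ →* ℂˣ) {b : GL (Fin 2) R}
    (hb : b ∈ borelSubgroup R) : chiB χ b = χ (isUnit_apply_one_one_of_inB hb).unit := dif_pos _

lemma chiB_ne_zero (χ : Rˣ →* ℂˣ) {b : GL (Fin 2) R} (hb : b ∈ borelSubgroup R) :
    chiB χ b ≠ 0 := by
  rw [chiB_eq_of_mem_borelSubgroup χ hb]
  exact Units.ne_zero _

lemma chiB_mul (χ : Rˣ →* ℂˣ) {b b' : GL (Fin 2) R} (hb : b ∈ borelSubgroup R)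
    (hb' : b' ∈ borelSubgroup R) :
    chiB χ (b * b') = chiB χ b * chiB χ b' := by
  have hd := isUnit_apply_one_one_of_inB hb
  have hd' := isUnit_apply_one_one_of_inB hb'
  have hdd : IsUnit (((b * b' : GL (Fin 2) R) : Matrix (Fin 2) (Fin 2) R) 1 1) := by
    rw [mul_apply_one_one_of_inB hb]
    exact hd.mul hd'
  rw [chiB_eq_of_mem_borelSubgroup χ hb, chiB_eq_of_mem_borelSubgroup χ hb',
    chiB_eq_of_mem_borelSubgroup χ (Subgroup.mul_mem _ hb hb'), ← Units.val_mul, ← map_mul]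
  congr 2
  ext
  simp [mul_apply_one_one_of_inB hb]

end Borel

section Hecke

variable {R : Type*} [CommRing R]

lemma cardB_ne_zero [Finite R] : (cardB R : ℂ) ≠ 0 :=
  Nat.cast_ne_zero.mpr (Nat.card_pos (α := borelSubgroup R)).ne'

variable [Fintype R] [DecidableEq R] (χ : Rˣ →* ℂˣ)

def borelAverage : (GL (Fin 2) R → ℂ) →ₗ[ℂ] (GL (Fin 2) R → ℂ) :=
  (cardB R : ℂ)⁻¹ • ∑ b : borelSubgroup R,
    (chiB χ b)⁻¹ • LinearMap.funLeft ℂ ℂ ((b : GL (Fin 2) R) * ·)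

lemma borelAverage_apply (φ : GL (Fin 2) R → ℂ) (x : GL (Fin 2) R) :
    borelAverage χ φ x
      = (cardB R : ℂ)⁻¹ * ∑ b : borelSubgroup R, (chiB χ b)⁻¹ * φ (b * x) := by
  simp [borelAverage]

lemma borelAverage_mul_left (φ : GL (Fin 2) R → ℂ) {b₀ : GL (Fin 2) R}
    (hb₀ : b₀ ∈ borelSubgroup R) (x : GL (Fin 2) R) :
    borelAverage χ φ (b₀ * x) = chiB χ b₀ * borelAverage χ φ x := by
  have hsummand (b : borelSubgroup R) :
      (chiB χ b)⁻¹ * φ (b * (b₀ * x))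
        = chiB χ b₀ * ((chiB χ (b * b₀))⁻¹ * φ (b * b₀ * x)) := by
    rw [chiB_mul χ b.2 hb₀, mul_assoc]
    field_simp [chiB_ne_zero χ b.2, chiB_ne_zero χ hb₀]
  calc borelAverage χ φ (b₀ * x)
      = (cardB R : ℂ)⁻¹ * ∑ b : borelSubgroup R,
          chiB χ b₀ * ((chiB χ (b * b₀))⁻¹ * φ (b * b₀ * x)) := by
        rw [borelAverage_apply, Finset.sum_congr rfl fun b _ => hsummand b]
    _ = chiB χ b₀ * ((cardB R : ℂ)⁻¹ * ∑ b : borelSubgroup R, (chiB χ b)⁻¹ * φ (b * x)) := by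
        rw [← Finset.mul_sum, mul_left_comm]
        congr 2
        exact Fintype.sum_equiv (Equiv.mulRight ⟨b₀, hb₀⟩) _ _ fun _ => by
          simp only [Equiv.coe_mulRight, Subgroup.coe_mul]
    _ = chiB χ b₀ * borelAverage χ φ x := by rw [borelAverage_apply]

lemma borelAverage_of_equivariant {φ : GL (Fin 2) R → ℂ}
    (hφ : ∀ b x : GL (Fin 2) R, inB b → φ (b * x) = chiB χ b * φ x) :
    borelAverage χ φ = φ := by
  funext x
  have hsummand (b : borelSubgroup R) : (chiB χ b)⁻¹ * φ (b * x) = φ x := by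
    rw [hφ b x b.2, inv_mul_cancel_left₀ (chiB_ne_zero χ b.2)]
  rw [borelAverage_apply, Finset.sum_congr rfl fun b _ => hsummand b, Finset.sum_const,
    Finset.card_univ, nsmul_eq_mul, ← Nat.card_eq_fintype_card]
  exact inv_mul_cancel_left₀ cardB_ne_zero _

lemma borelAverage_single_inv_mul_apply {y : GL (Fin 2) R} (hy : y ∉ borelSubgroup R)
    (x : GL (Fin 2) R) :
    borelAverage χ (Pi.single x 1) (y⁻¹ * x) = 0 := by
  refine (borelAverage_apply χ _ _).trans (mul_eq_zero_of_right _ ?_)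
  refine Finset.sum_eq_zero fun b _ => mul_eq_zero_of_right _ (Pi.single_eq_of_ne ?_ 1)
  intro hbx
  rw [← mul_assoc, mul_eq_right, mul_inv_eq_one] at hbx
  exact hy (hbx ▸ b.2)

def convLinear (f : GL (Fin 2) R → ℂ) : (GL (Fin 2) R → ℂ) →ₗ[ℂ] (GL (Fin 2) R → ℂ) :=
  (cardB R : ℂ)⁻¹ • ∑ y, f y • LinearMap.funLeft ℂ ℂ (y⁻¹ * ·)

lemma convLinear_apply (f φ : GL (Fin 2) R → ℂ) : convLinear f φ = conv f φ := by
  funext x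
  simp [convLinear, conv]

lemma trace_convLinear_comp_borelAverage {f : GL (Fin 2) R → ℂ}
    (hf : ∀ b ∈ borelSubgroup R, f b = 0) :
    LinearMap.trace ℂ _ (convLinear f ∘ₗ borelAverage χ) = 0 := by
  rw [LinearMap.trace_eq_matrix_trace ℂ (Pi.basisFun ℂ _), Matrix.trace]
  refine Finset.sum_eq_zero fun x _ => ?_
  rw [diag_apply, LinearMap.toMatrix_apply, Pi.basisFun_repr, Pi.basisFun_apply,
    LinearMap.comp_apply, convLinear_apply, conv]
  refine mul_eq_zero_of_right _ (Finset.sum_eq_zero fun y _ => ?_)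
  by_cases hy : y ∈ borelSubgroup R
  · rw [hf y hy, zero_mul]
  · rw [borelAverage_single_inv_mul_apply χ hy, mul_zero]

end Hecke

lemma mul_yG_mul_apply_one_zero {R : Type*} [CommRing R] {b b' : GL (Fin 2) R} (hb : inB b)
    (hb' : inB b') (t : R) :
    ((b * yG t * b' : GL (Fin 2) R) : Matrix (Fin 2) (Fin 2) R) 1 0
      = (b : Matrix (Fin 2) (Fin 2) R) 1 1 * t * (b' : Matrix (Fin 2) (Fin 2) R) 0 0 := by
  have hb10 : (b : Matrix (Fin 2) (Fin 2) R) 1 0 = 0 := hb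
  have hb'10 : (b' : Matrix (Fin 2) (Fin 2) R) 1 0 = 0 := hb'
  simp [yG, mul_apply, Fin.sum_univ_two, hb10, hb'10]

lemma not_inB_mul_yG_mul {R : Type*} [CommRing R] {t : R} (ht : t ≠ 0) {b b' : GL (Fin 2) R}
    (hb : inB b) (hb' : inB b') : ¬ inB (b * yG t * b') := by
  rw [inB, mul_yG_mul_apply_one_zero hb hb',
    (isUnit_apply_zero_zero_of_inB hb').mul_left_eq_zero,
    (isUnit_apply_one_one_of_inB hb).mul_right_eq_zero]
  exact ht

lemma natCast_pow_ne_zero {p n j : ℕ} (hp : 1 < p) (hj : j < n) :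
    (p : ZMod (p ^ n)) ^ j ≠ 0 := by
  rw [← Nat.cast_pow, Ne, ZMod.natCast_eq_zero_iff, Nat.pow_dvd_pow_iff_le_right hp]
  omega

lemma isV.apply_eq_zero_of_mem_borelSubgroup {p n j : ℕ} {χ : (ZMod (p ^ n))ˣ →* ℂˣ}
    {V : GL (Fin 2) (ZMod (p ^ n)) → ℂ} (hV : isV p n χ j V) (hpj : (p : ZMod (p ^ n)) ^ j ≠ 0)
    {b : GL (Fin 2) (ZMod (p ^ n))} (hb : b ∈ borelSubgroup _) : V b = 0 :=
  hV.2.1 b fun ⟨_, _, hb₁, hb₂, hb_eq⟩ => not_inB_mul_yG_mul hpj hb₁ hb₂ (hb_eq ▸ hb)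

section Induced

variable {p n : ℕ} [NeZero (p ^ n)] (χ : (ZMod (p ^ n))ˣ →* ℂˣ)

lemma borelAverage_mem_Isub (φ : GL (Fin 2) (ZMod (p ^ n)) → ℂ) :
    borelAverage χ φ ∈ Isub p n χ :=
  fun _ x hb => borelAverage_mul_left χ φ hb x

def Isub.projection : (GL (Fin 2) (ZMod (p ^ n)) → ℂ) →ₗ[ℂ] Isub p n χ :=
  (borelAverage χ).codRestrict (Isub p n χ) (borelAverage_mem_Isub χ)

theorem trace_eq_zero_of_conv_of_forall_mem_borelSubgroup
    {f : GL (Fin 2) (ZMod (p ^ n)) → ℂ} (hf : ∀ b ∈ borelSubgroup _, f b = 0)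
    (E : Isub p n χ →ₗ[ℂ] Isub p n χ)
    (hE : ∀ φ : Isub p n χ, (E φ : GL (Fin 2) (ZMod (p ^ n)) → ℂ) = conv f φ) :
    LinearMap.trace ℂ (Isub p n χ) E = 0 := by
  have hE_eq : E = Isub.projection χ ∘ₗ convLinear f ∘ₗ (Isub p n χ).subtype := by
    ext φ : 1
    refine Subtype.ext ?_
    change _ = borelAverage χ (convLinear f φ)
    rw [convLinear_apply, ← hE, borelAverage_of_equivariant χ (E φ).2]
  rw [hE_eq, LinearMap.trace_comp_cycle, Isub.projection, LinearMap.subtype_comp_codRestrict]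
  exact trace_convLinear_comp_borelAverage χ hf

end Induced

theorem stmt14_general (p n : ℕ) [Fact p.Prime] (hn : 1 ≤ n)
    (χ : (ZMod (p ^ n))ˣ →* ℂˣ)
    (j : ℕ) (hjn : j ≤ n - 1)
    (V : GL (Fin 2) (ZMod (p ^ n)) → ℂ) (hV : isV p n χ j V)
    (E : Isub p n χ →ₗ[ℂ] Isub p n χ)
    (hE : ∀ φ : Isub p n χ, (E φ : GL (Fin 2) (ZMod (p ^ n)) → ℂ) = conv V φ) :
    LinearMap.trace ℂ (Isub p n χ) E = 0 := by
  have hpj : (p : ZMod (p ^ n)) ^ j ≠ 0 :=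
    natCast_pow_ne_zero (Fact.out : p.Prime).one_lt (by omega)
  exact trace_eq_zero_of_conv_of_forall_mem_borelSubgroup χ
    (fun _ hb => hV.apply_eq_zero_of_mem_borelSubgroup hpj hb) E hE

/-- For `r ≤ j ≤ n−1`, the endomorphism `π_L(V_j) : φ ↦ V_j * φ` of `I(n)` has trace `0`. -/
theorem stmt14 (p n r : ℕ) [Fact p.Prime] (hn : 1 ≤ n) (hr : 1 ≤ r) (hrn : r ≤ n)
    (χ : (ZMod (p ^ n))ˣ →* ℂˣ) (hχ : hasConductor p n r χ)
    (j : ℕ) (hj : r ≤ j) (hjn : j ≤ n - 1)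
    (V : GL (Fin 2) (ZMod (p ^ n)) → ℂ) (hV : isV p n χ j V)
    (E : Isub p n χ →ₗ[ℂ] Isub p n χ)
    (hE : ∀ φ : Isub p n χ, (E φ : GL (Fin 2) (ZMod (p ^ n)) → ℂ) = conv V φ) :
    LinearMap.trace ℂ (Isub p n χ) E = 0 :=
  stmt14_general p n hn χ j hjn V hV E hE

end
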